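/- arXiv:1709.02652 — 3 statements merged into one kernel-verified Lean document; each statement's English description precedes it below -/
import Mathlib

section
/- Let (X, d) be a metric space, K ⊆ X a set, Σ ∈ K, F : X → ℝ a lower semicontinuous functional, and λ > 0. Let (η_i) be a sequence of nonnegative real numbers with η_i → 0, and for each i let R_i ∈ K be a minimizer over K of the penalized functional T ↦ F(T) + λ·|d(T, Σ) − η_i|. If R ∈ K and d(R_i, R) → 0, then R is a minimizer over K of the functional T ↦ F(T) + λ·d(T, Σ). -/
/-- Abstract form of Lemma 3.2 of Inauen–Marchese: subsequential limits of minimizers of the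
penalized functionals `T ↦ F T + λ·|d(T, Σ) − η_i|` (with `η_i → 0`, `η_i ≥ 0`) minimize
`T ↦ F T + λ·d(T, Σ)` over `K`, provided `F` is lower semicontinuous. -/
theorem stmt_1 {X : Type*} [MetricSpace X] (K : Set X) (σ : X) (hσ : σ ∈ K)
    (F : X → ℝ) (hF : LowerSemicontinuous F) (lam : ℝ) (hlam : 0 < lam)
    (η : ℕ → ℝ) (hηnonneg : ∀ i, 0 ≤ η i)
    (hηlim : Filter.Tendsto η Filter.atTop (nhds 0))
    (R : ℕ → X) (hRK : ∀ i, R i ∈ K)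
    (hRmin : ∀ i, ∀ T ∈ K,
      F (R i) + lam * |dist (R i) σ - η i| ≤ F T + lam * |dist T σ - η i|)
    (Rlim : X) (hRlimK : Rlim ∈ K)
    (hconv : Filter.Tendsto (fun i => dist (R i) Rlim) Filter.atTop (nhds 0)) :
    ∀ T ∈ K, F Rlim + lam * dist Rlim σ ≤ F T + lam * dist T σ := by
  intro T hT
  have hR : Filter.Tendsto R Filter.atTop (nhds Rlim) :=
    tendsto_iff_dist_tendsto_zero.2 hconv
  have hd : Filter.Tendsto (fun i => |dist (R i) σ - η i|) Filter.atTop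
      (nhds (dist Rlim σ)) := by
    have h1 : Filter.Tendsto (fun i => dist (R i) σ - η i) Filter.atTop
        (nhds (dist Rlim σ - 0)) :=
      ((hR.dist (tendsto_const_nhds : Filter.Tendsto (fun _ : ℕ => σ) Filter.atTop (nhds σ))).sub hηlim)
    have := h1.abs
    simpa [abs_of_nonneg dist_nonneg] using this
  have hdT : Filter.Tendsto (fun i => |dist T σ - η i|) Filter.atTop
      (nhds (dist T σ)) := by
    have h1 : Filter.Tendsto (fun i => dist T σ - η i) Filter.atTop
        (nhds (dist T σ - 0)) := tendsto_const_nhds.sub hηlim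
    have := h1.abs
    simpa [abs_of_nonneg dist_nonneg] using this
  refine le_of_forall_pos_le_add (fun ε hε => ?_)
  set ε₀ : ℝ := ε / (1 + 2 * lam) with hε₀def
  have hε₀ : 0 < ε₀ := div_pos hε (by linarith)
  have h1 : ∀ᶠ i in Filter.atTop, F Rlim - ε₀ < F (R i) :=
    hR.eventually (hF Rlim (F Rlim - ε₀) (by linarith))
  have h2 : ∀ᶠ i in Filter.atTop, dist Rlim σ - ε₀ < |dist (R i) σ - η i| :=
    hd.eventually (eventually_gt_nhds (by linarith))
  have h3 : ∀ᶠ i in Filter.atTop, |dist T σ - η i| < dist T σ + ε₀ :=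
    hdT.eventually (eventually_lt_nhds (by linarith))
  obtain ⟨i, hi1, hi2, hi3⟩ := (h1.and (h2.and h3)).exists
  have hmin := hRmin i T hT
  have hεeq : ε₀ * (1 + 2 * lam) = ε := div_mul_cancel₀ ε (by linarith)
  nlinarith [mul_lt_mul_of_pos_left hi2 hlam, mul_lt_mul_of_pos_left hi3 hlam]
end

section
/- Let (X, d) be a metric space, K ⊆ X a nonempty compact set, Σ ∈ K, and F : X → ℝ a lower semicontinuous functional with F ≥ 0 on K. Suppose there exist ε > 0 and C > 0 such that F(Σ) − F(S) ≤ C·d(S, Σ) for every S ∈ K with d(S, Σ) ≤ ε, and fix λ > max(C, F(Σ)/ε). Let (η_i) be a sequence of nonnegative real numbers with η_i → 0, and for each i let R_i ∈ K be a minimizer over K of T ↦ F(T) + λ·|d(T, Σ) − η_i|. Then d(R_i, Σ) → 0. -/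
/-- Abstract form of the key convergence step in Section 3 of Inauen–Marchese: on a nonempty
compact `K`, with `F` lower semicontinuous, `F ≥ 0` on `K`, the calibration estimate
`F Σ − F S ≤ C·d(S, Σ)` for `d(S, Σ) ≤ ε`, and `λ > max(C, F(Σ)/ε)`, minimizers `R_i` of the
penalized functionals `T ↦ F T + λ·|d(T, Σ) − η_i|` (with `η_i ≥ 0`, `η_i → 0`) satisfy
`d(R_i, Σ) → 0`. -/
theorem stmt_7 {X : Type*} [MetricSpace X] (K : Set X) (hKne : K.Nonempty)
    (hKcomp : IsCompact K) (σ : X) (hσ : σ ∈ K)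
    (F : X → ℝ) (hF : LowerSemicontinuous F) (hFnonneg : ∀ T ∈ K, 0 ≤ F T)
    (ε C : ℝ) (hε : 0 < ε) (hC : 0 < C)
    (hcal : ∀ S ∈ K, dist S σ ≤ ε → F σ - F S ≤ C * dist S σ)
    (lam : ℝ) (hlam : max C (F σ / ε) < lam)
    (η : ℕ → ℝ) (hηnonneg : ∀ i, 0 ≤ η i)
    (hηlim : Filter.Tendsto η Filter.atTop (nhds 0))
    (R : ℕ → X) (hRK : ∀ i, R i ∈ K)
    (hRmin : ∀ i, ∀ T ∈ K,
      F (R i) + lam * |dist (R i) σ - η i| ≤ F T + lam * |dist T σ - η i|) :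
    Filter.Tendsto (fun i => dist (R i) σ) Filter.atTop (nhds 0) := by
  have hCl : C < lam := lt_of_le_of_lt (le_max_left _ _) hlam
  have hlpos : 0 < lam := hC.trans hCl
  have hFσ : F σ / lam < ε := by
    have h1 : F σ / ε < lam := lt_of_le_of_lt (le_max_right _ _) hlam
    have h2 : F σ < lam * ε := by
      have := (div_lt_iff₀ hε).mp h1
      linarith
    exact (div_lt_iff₀ hlpos).mpr (by linarith)
  have hev : ∀ᶠ i in Filter.atTop, η i ≤ (ε - F σ / lam) / 2 := by
    have h2 : (0:ℝ) < (ε - F σ / lam) / 2 := by linarith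
    exact hηlim.eventually_le_const h2
  have key : ∀ᶠ i in Filter.atTop, dist (R i) σ ≤ (2 * lam / (lam - C)) * η i := by
    filter_upwards [hev] with i hi
    set d := dist (R i) σ with hd_def
    have hmin := hRmin i σ hσ
    rw [dist_self] at hmin
    have habs : |(0:ℝ) - η i| = η i := by
      rw [zero_sub, abs_neg, abs_of_nonneg (hηnonneg i)]
    rw [habs] at hmin
    have hFR : 0 ≤ F (R i) := hFnonneg _ (hRK i)
    have hdd : d - η i ≤ |d - η i| := le_abs_self _
    have hFσ' : F σ ≤ lam * (ε - 2 * η i) := by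
      have : F σ / lam ≤ ε - 2 * η i := by linarith
      have := (div_le_iff₀ hlpos).mp this
      linarith [mul_comm lam (ε - 2 * η i)]
    have hd : d ≤ ε := by nlinarith
    have hcal' := hcal (R i) (hRK i) hd
    rw [div_mul_eq_mul_div, le_div_iff₀ (by linarith : (0:ℝ) < lam - C)]
    nlinarith
  have hlim : Filter.Tendsto (fun i => (2 * lam / (lam - C)) * η i)
      Filter.atTop (nhds 0) := by
    simpa using hηlim.const_mul (2 * lam / (lam - C))
  exact squeeze_zero' (Filter.Eventually.of_forall (fun i => dist_nonneg)) key hlim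
end

section
/- Let (X, d) be a metric space, K ⊆ X a nonempty compact set, Σ ∈ K, and F : X → ℝ a lower semicontinuous functional with F ≥ 0 on K. Suppose there exists ε > 0 such that F(Σ) < F(S) for every S ∈ K with 0 < d(S, Σ) ≤ ε, and fix λ > F(Σ)/ε². Let (η_i) be a sequence of nonnegative real numbers with η_i → 0, and for each i let R_i ∈ K be a minimizer over K of T ↦ F(T) + λ·(d(T, Σ) − η_i)². Then d(R_i, Σ) → 0. -/
/-- Abstract form of Lemma 4.1 of Inauen–Marchese in full: on a nonempty compact `K`, with
`F` lower semicontinuous, `F ≥ 0` on `K`, the strict minimality `F Σ < F S` for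
`0 < d(S, Σ) ≤ ε`, and `λ > F(Σ)/ε²`, minimizers `R_i` of the quadratically penalized
functionals `T ↦ F T + λ·(d(T, Σ) − η_i)²` (with `η_i ≥ 0`, `η_i → 0`) satisfy
`d(R_i, Σ) → 0`. -/
theorem stmt_8 {X : Type*} [MetricSpace X] (K : Set X) (hKne : K.Nonempty)
    (hKcomp : IsCompact K) (σ : X) (hσ : σ ∈ K)
    (F : X → ℝ) (hF : LowerSemicontinuous F) (hFnonneg : ∀ T ∈ K, 0 ≤ F T)
    (ε : ℝ) (hε : 0 < ε)
    (hmin : ∀ S ∈ K, 0 < dist S σ → dist S σ ≤ ε → F σ < F S)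
    (lam : ℝ) (hlam : F σ / ε ^ 2 < lam)
    (η : ℕ → ℝ) (hηnonneg : ∀ i, 0 ≤ η i)
    (hηlim : Filter.Tendsto η Filter.atTop (nhds 0))
    (R : ℕ → X) (hRK : ∀ i, R i ∈ K)
    (hRmin : ∀ i, ∀ T ∈ K,
      F (R i) + lam * (dist (R i) σ - η i) ^ 2 ≤ F T + lam * (dist T σ - η i) ^ 2) :
    Filter.Tendsto (fun i => dist (R i) σ) Filter.atTop (nhds 0) := by
  have hFσ : 0 ≤ F σ := hFnonneg σ hσ
  have hlam0 : 0 < lam := lt_of_le_of_lt (div_nonneg hFσ (by positivity)) hlam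
  -- basic bound from minimality against σ
  have hbound : ∀ i, F (R i) ≤ F σ + lam * η i ^ 2 - lam * (dist (R i) σ - η i) ^ 2 := by
    intro i
    have := hRmin i σ hσ
    rw [dist_self] at this
    nlinarith [this]
  rw [Metric.tendsto_atTop]
  by_contra hcon
  push_neg at hcon
  obtain ⟨δ, hδ, hfreq⟩ := hcon
  have hfreq' : ∃ᶠ n in Filter.atTop, δ ≤ dist (R n) σ := by
    rw [Filter.frequently_atTop]
    intro N
    obtain ⟨n, hn, hd⟩ := hfreq N
    refine ⟨n, hn, ?_⟩
    rw [Real.dist_eq, abs_sub_comm, abs_of_nonpos (by simp [dist_nonneg])] at hd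
    simpa using hd
  obtain ⟨φ, hφ, hφδ⟩ := Filter.extraction_of_frequently_atTop hfreq'
  obtain ⟨Rinf, hRinfK, ψ, hψ, hconv⟩ := hKcomp.tendsto_subseq (fun i => hRK (φ i))
  set u : ℕ → X := fun i => R (φ (ψ i)) with hu
  have hconv' : Filter.Tendsto u Filter.atTop (nhds Rinf) := hconv
  set c := dist Rinf σ with hc
  have hdconv : Filter.Tendsto (fun i => dist (u i) σ) Filter.atTop (nhds c) :=
    hconv'.dist tendsto_const_nhds
  have hcδ : δ ≤ c :=
    ge_of_tendsto hdconv (Filter.Eventually.of_forall fun i => hφδ (ψ i))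
  have hcpos : 0 < c := lt_of_lt_of_le hδ hcδ
  -- η along the subsequence
  have hηconv : Filter.Tendsto (fun i => η (φ (ψ i))) Filter.atTop (nhds 0) :=
    hηlim.comp ((hφ.comp hψ).tendsto_atTop)
  -- the upper bound sequence converges to F σ - lam * c ^ 2
  have hgconv : Filter.Tendsto
      (fun i => F σ + lam * η (φ (ψ i)) ^ 2 - lam * (dist (u i) σ - η (φ (ψ i))) ^ 2)
      Filter.atTop (nhds (F σ - lam * c ^ 2)) := by
    have : Filter.Tendsto
        (fun i => F σ + lam * η (φ (ψ i)) ^ 2 - lam * (dist (u i) σ - η (φ (ψ i))) ^ 2)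
        Filter.atTop (nhds (F σ + lam * 0 ^ 2 - lam * (c - 0) ^ 2)) := by
      exact ((tendsto_const_nhds.add ((tendsto_const_nhds.mul (hηconv.pow 2)))).sub
        (tendsto_const_nhds.mul ((hdconv.sub hηconv).pow 2)))
    simpa using this
  -- lsc gives F Rinf ≤ F σ - lam * c ^ 2
  have hle : F Rinf ≤ F σ - lam * c ^ 2 := by
    by_contra hlt
    push_neg at hlt
    obtain ⟨y, hy1, hy2⟩ := exists_between hlt
    have h1 : ∀ᶠ i in Filter.atTop, y < F (u i) :=
      hconv'.eventually (hF Rinf y hy2)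
    have h2 : ∀ᶠ i in Filter.atTop,
        F σ + lam * η (φ (ψ i)) ^ 2 - lam * (dist (u i) σ - η (φ (ψ i))) ^ 2 < y :=
      hgconv.eventually_lt_const hy1
    obtain ⟨i, hi1, hi2⟩ := (h1.and h2).exists
    have := hbound (φ (ψ i))
    exact absurd (lt_of_lt_of_le hi1 this) (not_lt.mpr hi2.le)
  have hFRinf : 0 ≤ F Rinf := hFnonneg _ hRinfK
  have hc2 : c ^ 2 ≤ F σ / lam := by
    rw [le_div_iff₀ hlam0]
    nlinarith
  have hcε : c ≤ ε := by
    by_contra h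
    push_neg at h
    have h1 : F σ < lam * ε ^ 2 := (div_lt_iff₀ (by positivity)).mp hlam
    have h2 : lam * c ^ 2 ≤ F σ := by linarith
    have h3 : ε ^ 2 < c ^ 2 := by nlinarith
    nlinarith
  have := hmin Rinf hRinfK hcpos hcε
  nlinarith
end
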